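/- arXiv:1907.03637 — 2 statements merged into one kernel-verified Lean document; each statement's English description precedes it below -/
import Mathlib

section
/- Let (R, m) be a Noetherian local ring, let f_1, …, f_r ∈ R, let J ⊆ R be an ideal such that (f_1, …, f_r) + J is m-primary, and let k = ar_J((f_1, …, f_r)) be the Artin–Rees number of (f_1, …, f_r) with respect to J. Then for every ε_1, …, ε_r ∈ J^{k+1} and every n ≥ 0, ℓ(R/((f_1+ε_1, …, f_r+ε_r) + J^n)) ≤ ℓ(R/((f_1, …, f_r) + J^n)). -/
open IsLocalRing

/-- An element `f` of a Noetherian local ring `R` is filter-regular if `f ∉ P` for every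
associated prime `P` of `R` other than the maximal ideal. -/
def IsFilterRegularElem {R : Type*} [CommRing R] [IsLocalRing R] (f : R) : Prop :=
  ∀ P ∈ associatedPrimes R R, P ≠ maximalIdeal R → f ∉ P

/-- The image of `f` in `R ⧸ I` is a filter-regular element: `f` avoids all associated primes of
the `R`-module `R ⧸ I` except the maximal ideal. -/
def IsFilterRegularOn {R : Type*} [CommRing R] [IsLocalRing R] (I : Ideal R) (f : R) : Prop :=
  ∀ P ∈ associatedPrimes R (R ⧸ I), P ≠ maximalIdeal R → f ∉ P

/-- `f 0, f 1, …` is a filter-regular sequence: each `f i` is filter-regular modulo the ideal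
generated by the preceding elements. -/
def IsFilterRegularSeq {R : Type*} [CommRing R] [IsLocalRing R] {r : ℕ} (f : Fin r → R) : Prop :=
  ∀ i : Fin r, IsFilterRegularOn (Ideal.span (f '' {j | j < i})) (f i)

/-- The length of an `R`-module `M`, i.e. the supremum of lengths of strictly increasing chains
of submodules of `M`. -/
noncomputable def moduleLength (R M : Type*) [Ring R] [AddCommGroup M] [Module R M] :
    WithBot ℕ∞ :=
  Order.krullDim (Submodule R M)

/-- The Artin–Rees number of `I` with respect to `J`: the least `s` with
`J ^ n ⊓ I = J ^ (n - s) * (J ^ s ⊓ I)` for all `n ≥ s`. -/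
noncomputable def arNumber {R : Type*} [CommRing R] (J I : Ideal R) : ℕ :=
  sInf {s : ℕ | ∀ n ≥ s, J ^ n ⊓ I = J ^ (n - s) * (J ^ s ⊓ I)}

open RingTheory.Sequence in
/-- The depth of a Noetherian local ring: the supremum of lengths of regular sequences contained
in the maximal ideal. -/
noncomputable def ringDepth (S : Type*) [CommRing S] [IsLocalRing S] : ℕ∞ :=
  sSup {n : ℕ∞ | ∃ l : List S,
    (∀ x ∈ l, x ∈ maximalIdeal S) ∧ IsRegular S l ∧ (l.length : ℕ∞) = n}

/-- A local ring is Cohen–Macaulay if its depth equals its Krull dimension. -/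
def IsCMLocal (S : Type*) [CommRing S] [IsLocalRing S] : Prop :=
  (ringDepth S : WithBot ℕ∞) = ringKrullDim S

/-- A (not necessarily local) ring is Cohen–Macaulay if it is Noetherian and all of its
localizations at primes are Cohen–Macaulay local rings. -/
def IsCMRing (S : Type*) [CommRing S] : Prop :=
  IsNoetherianRing S ∧ ∀ (P : Ideal S) (hP : P.IsPrime),
    letI := hP
    IsCMLocal (Localization.AtPrime P)

/-- `aIdealAt S n = ∏_{i = 0}^{dim S - 1} Ann H_n^i(S)`, the product of the annihilators of the
local cohomology modules of `S` supported at `n`, in degrees strictly below `dim S`. -/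
noncomputable def aIdealAt (S : Type u) [CommRing S] (n : Ideal S) : Ideal S :=
  ∏ i ∈ Finset.range (ENat.toNat ((ringKrullDim S).unbotD 0)),
    Module.annihilator S ((localCohomology n i).obj (ModuleCat.of S S))

/-- The non Cohen–Macaulay locus: primes `P` such that `S_P` is not Cohen–Macaulay. -/
def NCM (S : Type*) [CommRing S] : Set (Ideal S) :=
  {P | ∃ hP : P.IsPrime, ¬ (letI := hP; IsCMLocal (Localization.AtPrime P))}

/-- The dimension of the non Cohen–Macaulay locus: `sup {dim S/P : P ∈ NCM S}`. -/
noncomputable def dimNCM (S : Type*) [CommRing S] : WithBot ℕ∞ :=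
  ⨆ P ∈ NCM S, ringKrullDim (S ⧸ P)


section AuxLemmas


open Order

section OrderAux

variable {α β γ : Type*}

lemma aux_length_le_height_add_height [PartialOrder β] [PartialOrder γ] :
    ∀ (n : ℕ) (p : LTSeries (β × γ)), p.length = n →
      (n : ℕ∞) ≤ Order.height p.last.1 + Order.height p.last.2 := by
  intro n
  induction n with
  | zero => intro p hp; simp
  | succ n ih =>
    intro p hp
    have hne : p.length ≠ 0 := by omega
    have hq : p.eraseLast.length = n := by
      rw [RelSeries.eraseLast_length, hp]; omega
    have ihq := ih p.eraseLast hq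
    have hrel : p.eraseLast.last < p.last := p.eraseLast_last_rel_last hne
    have hcast : ((n + 1 : ℕ) : ℕ∞) = (n : ℕ∞) + 1 := by push_cast; ring
    rw [hcast]
    rcases Prod.lt_iff.mp hrel with ⟨h1, h2⟩ | ⟨h1, h2⟩
    · by_cases htop : Order.height p.last.1 = ⊤
      · rw [htop, top_add]; exact le_top
      · have hfin : Order.height p.eraseLast.last.1 ≠ ⊤ :=
          fun h => htop (top_le_iff.mp (h ▸ Order.height_mono h1.le))
        have hlt : Order.height p.eraseLast.last.1 < Order.height p.last.1 :=
          Order.height_strictMono h1 (lt_top_iff_ne_top.mpr hfin)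
        calc (n : ℕ∞) + 1
            ≤ (Order.height p.eraseLast.last.1 + Order.height p.eraseLast.last.2) + 1 :=
              add_le_add_left ihq 1
          _ = (Order.height p.eraseLast.last.1 + 1) + Order.height p.eraseLast.last.2 := by
              rw [add_right_comm]
          _ ≤ Order.height p.last.1 + Order.height p.last.2 :=
              add_le_add ((ENat.add_one_le_iff hfin).mpr hlt) (Order.height_mono h2)
    · by_cases htop : Order.height p.last.2 = ⊤
      · rw [htop, add_top]; exact le_top
      · have hfin : Order.height p.eraseLast.last.2 ≠ ⊤ :=
          fun h => htop (top_le_iff.mp (h ▸ Order.height_mono h2.le))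
        have hlt : Order.height p.eraseLast.last.2 < Order.height p.last.2 :=
          Order.height_strictMono h2 (lt_top_iff_ne_top.mpr hfin)
        calc (n : ℕ∞) + 1
            ≤ (Order.height p.eraseLast.last.1 + Order.height p.eraseLast.last.2) + 1 :=
              add_le_add_left ihq 1
          _ = Order.height p.eraseLast.last.1 + (Order.height p.eraseLast.last.2 + 1) := by
              rw [add_assoc]
          _ ≤ Order.height p.last.1 + Order.height p.last.2 :=
              add_le_add (Order.height_mono h1) ((ENat.add_one_le_iff hfin).mpr hlt)

lemma aux_krullDim_prod_le [PartialOrder β] [PartialOrder γ] :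
    Order.krullDim (β × γ) ≤ Order.krullDim β + Order.krullDim γ := by
  rw [Order.krullDim]
  apply iSup_le
  intro p
  have h := aux_length_le_height_add_height p.length p rfl
  calc (p.length : WithBot ℕ∞)
      ≤ ((Order.height p.last.1 + Order.height p.last.2 : ℕ∞) : WithBot ℕ∞) := by
        exact_mod_cast h
    _ = ((Order.height p.last.1 : ℕ∞) : WithBot ℕ∞)
          + ((Order.height p.last.2 : ℕ∞) : WithBot ℕ∞) := by push_cast; rfl
    _ ≤ _ := add_le_add (Order.height_le_krullDim _) (Order.height_le_krullDim _)

lemma aux_krullDim_le_Iic_add_Ici [Lattice α] [IsModularLattice α] (a : α) :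
    Order.krullDim α ≤
      Order.krullDim {b : α // b ≤ a} + Order.krullDim {b : α // a ≤ b} := by
  refine le_trans (Order.krullDim_le_of_strictMono
    (fun x => ((⟨x ⊓ a, inf_le_right⟩ : {b : α // b ≤ a}),
               (⟨x ⊔ a, le_sup_right⟩ : {b : α // a ≤ b}))) ?_) aux_krullDim_prod_le
  intro x y hxy
  refine lt_of_le_of_ne
    (Prod.mk_le_mk.mpr ⟨Subtype.mk_le_mk.mpr (inf_le_inf_right a hxy.le),
      Subtype.mk_le_mk.mpr (sup_le_sup_right hxy.le a)⟩) ?_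
  intro h
  have h1 : x ⊓ a = y ⊓ a := congrArg (fun z => (z.1 : α)) h
  have h2 : x ⊔ a = y ⊔ a := congrArg (fun z => (z.2 : α)) h
  exact hxy.ne (eq_of_le_of_inf_le_of_sup_le hxy.le h1.ge h2.ge)

lemma aux_Iic_add_Ici_le_krullDim [Preorder α] (a : α) :
    Order.krullDim {b : α // b ≤ a} + Order.krullDim {b : α // a ≤ b} ≤
      Order.krullDim α := by
  have : Nonempty α := ⟨a⟩
  have h1 : Order.krullDim {b : α // b ≤ a} ≤ (Order.height a : WithBot ℕ∞) := by
    rw [Order.krullDim]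
    apply iSup_le
    intro p
    have hval : StrictMono (fun b : {b : α // b ≤ a} => (b : α)) := fun _ _ h => h
    have := Order.length_le_height (p := p.map _ hval) (x := a)
      (by rw [LTSeries.last_map]; exact p.last.2)
    simpa using (by exact_mod_cast this : ((p.map _ hval).length : WithBot ℕ∞) ≤ _)
  have h2 : Order.krullDim {b : α // a ≤ b} ≤ (Order.coheight a : WithBot ℕ∞) := by
    rw [Order.krullDim]
    apply iSup_le
    intro p
    have hval : StrictMono (fun b : {b : α // a ≤ b} => (b : α)) := fun _ _ h => h
    have := Order.length_le_coheight (p := p.map _ hval) (x := a)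
      (by rw [LTSeries.head_map]; exact p.head.2)
    simpa using (by exact_mod_cast this : ((p.map _ hval).length : WithBot ℕ∞) ≤ _)
  refine le_trans (add_le_add h1 h2) ?_
  rw [Order.krullDim_eq_iSup_height_add_coheight_of_nonempty]
  have : Order.height a + Order.coheight a ≤ ⨆ x : α, Order.height x + Order.coheight x :=
    le_iSup (fun x : α => Order.height x + Order.coheight x) a
  calc (Order.height a : WithBot ℕ∞) + (Order.coheight a : WithBot ℕ∞)
      = ((Order.height a + Order.coheight a : ℕ∞) : WithBot ℕ∞) := by push_cast; rfl
    _ ≤ _ := by exact_mod_cast this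

end OrderAux

section ModuleAux

variable {R : Type*} [Ring R]


variable {R : Type*} [Ring R]

lemma aux_moduleLength_le_of_ker_le {M M₁ M₂ : Type*} [AddCommGroup M] [Module R M]
    [AddCommGroup M₁] [Module R M₁] [AddCommGroup M₂] [Module R M₂]
    (φ₁ : M →ₗ[R] M₁) (φ₂ : M →ₗ[R] M₂) (h₁ : Function.Surjective φ₁)
    (h₂ : Function.Surjective φ₂) (hk : LinearMap.ker φ₁ ≤ LinearMap.ker φ₂) :
    moduleLength R M₂ ≤ moduleLength R M₁ := by
  have hker : ∀ S : Submodule R M₂, LinearMap.ker φ₂ ≤ Submodule.comap φ₂ S :=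
    fun S => Submodule.comap_mono bot_le
  have hleft : ∀ S : Submodule R M₂,
      Submodule.map φ₂ (Submodule.comap φ₁ (Submodule.map φ₁ (Submodule.comap φ₂ S))) = S := by
    intro S
    rw [Submodule.comap_map_eq, Submodule.map_sup,
      Submodule.map_comap_eq_of_surjective h₂]
    have : Submodule.map φ₂ (LinearMap.ker φ₁) = ⊥ := by
      rw [eq_bot_iff]
      rintro x ⟨y, hy, rfl⟩
      exact hk hy
    rw [this, sup_bot_eq]
  have hmono : Monotone (fun S : Submodule R M₂ => Submodule.map φ₁ (Submodule.comap φ₂ S)) :=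
    fun S T h => Submodule.map_mono (Submodule.comap_mono h)
  have hinj : Function.Injective
      (fun S : Submodule R M₂ => Submodule.map φ₁ (Submodule.comap φ₂ S)) := by
    intro S T h
    have := congrArg (fun U => Submodule.map φ₂ (Submodule.comap φ₁ U)) h
    simpa only [hleft] using this
  exact Order.krullDim_le_of_strictMono _ (hmono.strictMono_of_injective hinj)

lemma aux_moduleLength_eq_of_ker_eq {M M₁ M₂ : Type*} [AddCommGroup M] [Module R M]
    [AddCommGroup M₁] [Module R M₁] [AddCommGroup M₂] [Module R M₂]
    (φ₁ : M →ₗ[R] M₁) (φ₂ : M →ₗ[R] M₂) (h₁ : Function.Surjective φ₁)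
    (h₂ : Function.Surjective φ₂) (hk : LinearMap.ker φ₁ = LinearMap.ker φ₂) :
    moduleLength R M₁ = moduleLength R M₂ :=
  le_antisymm (aux_moduleLength_le_of_ker_le φ₂ φ₁ h₂ h₁ hk.ge)
    (aux_moduleLength_le_of_ker_le φ₁ φ₂ h₁ h₂ hk.le)

lemma aux_moduleLength_le_add {M : Type*} [AddCommGroup M] [Module R M] (N : Submodule R M) :
    moduleLength R M ≤ moduleLength R N + moduleLength R (M ⧸ N) := by
  have h := aux_krullDim_le_Iic_add_Ici (α := Submodule R M) N
  rw [moduleLength, moduleLength, moduleLength,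
    Order.krullDim_eq_of_orderIso (Submodule.MapSubtype.orderIso N),
    Order.krullDim_eq_of_orderIso (Submodule.comapMkQRelIso N)]
  exact h

lemma aux_moduleLength_add_le {M : Type*} [AddCommGroup M] [Module R M] (N : Submodule R M) :
    moduleLength R N + moduleLength R (M ⧸ N) ≤ moduleLength R M := by
  have h := aux_Iic_add_Ici_le_krullDim (α := Submodule R M) N
  rw [moduleLength, moduleLength, moduleLength,
    Order.krullDim_eq_of_orderIso (Submodule.MapSubtype.orderIso N),
    Order.krullDim_eq_of_orderIso (Submodule.comapMkQRelIso N)]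
  exact h

end ModuleAux

end AuxLemmas

/-- Srinivas–Trivedi: the Hilbert–Samuel function of a perturbation by elements of
`J^{k+1}`, where `k = ar_J((f_1, …, f_r))`, is at most the original one. -/
theorem hilbert_samuel_le_of_perturbation
    {R : Type*} [CommRing R] [IsNoetherianRing R] [IsLocalRing R]
    {r : ℕ} (f : Fin r → R) (J : Ideal R)
    (hJ : ∃ n : ℕ, maximalIdeal R ^ n ≤ Ideal.span (Set.range f) + J)
    (ε : Fin r → R)
    (hε : ∀ i, ε i ∈ J ^ (arNumber J (Ideal.span (Set.range f)) + 1)) :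
    ∀ n : ℕ,
      moduleLength R (R ⧸ (Ideal.span (Set.range fun i => f i + ε i) + J ^ n)) ≤
        moduleLength R (R ⧸ (Ideal.span (Set.range f) + J ^ n)) := by
  classical
  set I : Ideal R := Ideal.span (Set.range f) with hI
  set I' : Ideal R := Ideal.span (Set.range fun i => f i + ε i) with hI'
  set k : ℕ := arNumber J I with hkdef
  -- Artin–Rees property for k
  have hARne : {s : ℕ | ∀ n ≥ s, J ^ n ⊓ I = J ^ (n - s) * (J ^ s ⊓ I)}.Nonempty := by
    obtain ⟨s, hs⟩ := Ideal.exists_pow_inf_eq_pow_smul J (M := R) (I : Submodule R R)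
    refine ⟨s, fun n hn => ?_⟩
    have h := hs n hn
    simpa only [Ideal.smul_eq_mul, Ideal.mul_top] using h
  have hAR : ∀ n ≥ k, J ^ n ⊓ I = J ^ (n - k) * (J ^ k ⊓ I) := by
    have h := Nat.sInf_mem hARne
    exact h
  have hmemI' : ∀ i, f i + ε i ∈ I' := fun i => Ideal.subset_span ⟨i, rfl⟩
  have hII' : I ≤ I' ⊔ J ^ (k + 1) := by
    rw [hI, Ideal.span_le]
    rintro x ⟨i, rfl⟩
    have hfi : f i = (f i + ε i) - ε i := by ring
    rw [hfi]
    exact sub_mem (Submodule.mem_sup_left (hmemI' i)) (Submodule.mem_sup_right (hε i))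
  -- key containment
  have hclaim : ∀ m : ℕ, I ⊓ J ^ m ≤ I' ⊔ J ^ (m + 1) := by
    intro m
    rcases le_or_gt k m with hkm | hmk
    · calc I ⊓ J ^ m = J ^ m ⊓ I := inf_comm I (J ^ m)
        _ = J ^ (m - k) * (J ^ k ⊓ I) := hAR m hkm
        _ ≤ I' ⊔ J ^ (m + 1) := by
          rw [Ideal.mul_le]
          intro u hu v hv
          obtain ⟨hvJ, hvI⟩ := Submodule.mem_inf.mp hv
          rw [hI] at hvI
          obtain ⟨c, hc⟩ := Ideal.mem_span_range_iff_exists_fun.mp hvI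
          have hw : ∑ i, (u * c i) * (f i + ε i) ∈ I' :=
            sum_mem fun i _ => Ideal.mul_mem_left _ _ (hmemI' i)
          have hz : ∑ i, (u * c i) * ε i ∈ J ^ (m + 1) := by
            have hpow : J ^ (m - k) * J ^ (k + 1) = J ^ (m + 1) := by
              rw [← pow_add]
              congr 1
              omega
            rw [← hpow]
            exact sum_mem fun i _ =>
              Ideal.mul_mem_mul (Ideal.mul_mem_right (c i) _ hu) (hε i)
          have huv : u * v = (∑ i, (u * c i) * (f i + ε i)) - ∑ i, (u * c i) * ε i := by
            rw [← Finset.sum_sub_distrib]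
            have hterm : ∀ i ∈ Finset.univ,
                (u * c i) * (f i + ε i) - (u * c i) * ε i = u * (c i * f i) :=
              fun i _ => by ring
            rw [Finset.sum_congr rfl hterm, ← Finset.mul_sum, hc]
          rw [huv]
          exact sub_mem (Submodule.mem_sup_left hw) (Submodule.mem_sup_right hz)
    · refine le_trans inf_le_left (le_trans hII' ?_)
      exact sup_le_sup_left (Ideal.pow_le_pow_right (by omega)) I'
  have hstep : ∀ n : ℕ, (J ^ n ⊓ (I ⊔ J ^ (n + 1)) : Ideal R) ≤ I' ⊔ J ^ (n + 1) := by
    intro n x hx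
    obtain ⟨hxJ, hxB⟩ := Submodule.mem_inf.mp hx
    obtain ⟨y, hy, z, hz, rfl⟩ := Submodule.mem_sup.mp hxB
    have hyJ : y ∈ J ^ n := by
      have hy' : y = (y + z) - z := by ring
      rw [hy']
      exact sub_mem hxJ (Ideal.pow_le_pow_right (Nat.le_succ n) hz)
    have hyB' : y ∈ I' ⊔ J ^ (n + 1) := hclaim n (Submodule.mem_inf.mpr ⟨hy, hyJ⟩)
    exact add_mem hyB' (Submodule.mem_sup_right hz)
  -- main induction
  intro n
  change moduleLength R (R ⧸ (I' ⊔ J ^ n)) ≤ moduleLength R (R ⧸ (I ⊔ J ^ n))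
  induction n with
  | zero =>
    have htop : ∀ A : Ideal R, A ⊔ J ^ 0 = ⊤ := fun A => by
      rw [pow_zero, Ideal.one_eq_top, sup_top_eq]
    rw [htop, htop]
  | succ n IH =>
    set B : Ideal R := I ⊔ J ^ (n + 1) with hB
    set B' : Ideal R := I' ⊔ J ^ (n + 1) with hB'
    set N : Submodule R (R ⧸ B) := Submodule.map B.mkQ (J ^ n : Ideal R) with hN
    set N' : Submodule R (R ⧸ B') := Submodule.map B'.mkQ (J ^ n : Ideal R) with hN'
    let φ : (J ^ n : Ideal R) →ₗ[R] N :=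
      (B.mkQ ∘ₗ (J ^ n : Ideal R).subtype).codRestrict N
        (fun x => Submodule.mem_map_of_mem x.2)
    let φ' : (J ^ n : Ideal R) →ₗ[R] N' :=
      (B'.mkQ ∘ₗ (J ^ n : Ideal R).subtype).codRestrict N'
        (fun x => Submodule.mem_map_of_mem x.2)
    have hφsurj : Function.Surjective φ := by
      rintro ⟨y, hy⟩
      obtain ⟨x, hx, rfl⟩ := Submodule.mem_map.mp hy
      exact ⟨⟨x, hx⟩, rfl⟩
    have hφ'surj : Function.Surjective φ' := by
      rintro ⟨y, hy⟩
      obtain ⟨x, hx, rfl⟩ := Submodule.mem_map.mp hy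
      exact ⟨⟨x, hx⟩, rfl⟩
    have hφker : LinearMap.ker φ = Submodule.comap (J ^ n : Ideal R).subtype B := by
      rw [LinearMap.ker_codRestrict, LinearMap.ker_comp, Submodule.ker_mkQ]
    have hφ'ker : LinearMap.ker φ' = Submodule.comap (J ^ n : Ideal R).subtype B' := by
      rw [LinearMap.ker_codRestrict, LinearMap.ker_comp, Submodule.ker_mkQ]
    have hNlen : moduleLength R N' ≤ moduleLength R N := by
      refine aux_moduleLength_le_of_ker_le φ φ' hφsurj hφ'surj ?_
      rw [hφker, hφ'ker]
      intro x hx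
      simp only [Submodule.mem_comap] at hx ⊢
      exact hstep n (Submodule.mem_inf.mpr ⟨x.2, hx⟩)
    have hsupJ : ∀ A : Ideal R, (A ⊔ J ^ (n + 1)) ⊔ J ^ n = A ⊔ J ^ n := by
      intro A
      rw [sup_assoc, sup_eq_right.mpr (Ideal.pow_le_pow_right (I := J) (Nat.le_succ n))]
    have hqlen' : moduleLength R ((R ⧸ B') ⧸ N') = moduleLength R (R ⧸ (I' ⊔ J ^ n)) := by
      refine aux_moduleLength_eq_of_ker_eq (N'.mkQ ∘ₗ B'.mkQ) (I' ⊔ J ^ n).mkQ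
        ((Submodule.mkQ_surjective _).comp (Submodule.mkQ_surjective _))
        (Submodule.mkQ_surjective _) ?_
      rw [LinearMap.ker_comp, Submodule.ker_mkQ, Submodule.ker_mkQ, hN',
        Submodule.comap_map_mkQ]
      exact hsupJ I'
    have hqlen : moduleLength R ((R ⧸ B) ⧸ N) = moduleLength R (R ⧸ (I ⊔ J ^ n)) := by
      refine aux_moduleLength_eq_of_ker_eq (N.mkQ ∘ₗ B.mkQ) (I ⊔ J ^ n).mkQ
        ((Submodule.mkQ_surjective _).comp (Submodule.mkQ_surjective _))
        (Submodule.mkQ_surjective _) ?_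
      rw [LinearMap.ker_comp, Submodule.ker_mkQ, Submodule.ker_mkQ, hN,
        Submodule.comap_map_mkQ]
      exact hsupJ I
    calc moduleLength R (R ⧸ B')
        ≤ moduleLength R N' + moduleLength R ((R ⧸ B') ⧸ N') := aux_moduleLength_le_add N'
      _ ≤ moduleLength R N + moduleLength R ((R ⧸ B) ⧸ N) := by
          refine add_le_add hNlen ?_
          rw [hqlen', hqlen]
          exact IH
      _ ≤ moduleLength R (R ⧸ B) := aux_moduleLength_add_le N
end

section
/- Let R be a Noetherian ring, let f ∈ R, let J ⊆ R be an ideal, and let k = ar_J((f)) be the Artin–Rees number of the principal ideal (f) with respect to J. Then for every n ≥ k, (J^n : f) = J^{n−k}(J^k : f) + (0 : f). -/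
open IsLocalRing

/-! The Artin–Rees identity `J^n ∩ (f) = J^{n-k}(J^k ∩ (f))`, combined with
`(K : f)·(f) = K ∩ (f)`, says that `J^n ∩ (f) = J^{n-k}(J^k : f)·(f)`. Hence `x f ∈ J^n` forces
`x f = a f` for some `a ∈ J^{n-k}(J^k : f)`, i.e. `x ∈ a + (0 : f)`. -/

theorem pow_inf_eq_of_arNumber_le {R : Type*} [CommRing R] [IsNoetherianRing R]
    (J I : Ideal R) {n : ℕ} (hn : arNumber J I ≤ n) :
    J ^ n ⊓ I = J ^ (n - arNumber J I) * (J ^ arNumber J I ⊓ I) := by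
  obtain ⟨s, hs⟩ := Ideal.exists_pow_inf_eq_pow_smul J (I : Submodule R R)
  have hAR : ∀ m ≥ s, J ^ m ⊓ I = J ^ (m - s) * (J ^ s ⊓ I) := fun m hm ↦ by
    simpa only [smul_eq_mul, Ideal.mul_top] using hs m hm
  exact Nat.sInf_mem (s := {s | ∀ n ≥ s, J ^ n ⊓ I = J ^ (n - s) * (J ^ s ⊓ I)}) ⟨s, hAR⟩ n hn

namespace Ideal

variable {R : Type*} [CommRing R]

theorem colon_span_singleton_mul_eq_inf (K : Ideal R) (f : R) :
    K.colon (span {f}) * span {f} = K ⊓ span {f} := by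
  apply le_antisymm
  · rw [mul_le]
    intro c hc i hi
    exact ⟨by simpa using Submodule.mem_colon.mp hc i hi, mul_mem_left _ c hi⟩
  · rintro _ ⟨hcK, hcf⟩
    obtain ⟨b, rfl⟩ := mem_span_singleton'.mp hcf
    exact mul_mem_mul (mem_colon_span_singleton.mpr hcK) (mem_span_singleton_self f)

theorem colon_span_singleton_eq_sup_of_inf_eq {K A : Ideal R} {f : R}
    (h : K ⊓ span {f} = A * span {f}) :
    K.colon (span {f}) = A ⊔ (⊥ : Ideal R).colon (span {f}) := by
  apply le_antisymm
  · intro x hx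
    have hxf : x * f ∈ A * span {f} :=
      h ▸ ⟨mem_colon_span_singleton.mp hx, mul_mem_left _ x (mem_span_singleton_self f)⟩
    obtain ⟨a, ha, hax⟩ := mem_mul_span_singleton.mp hxf
    have hxa : x - a ∈ (⊥ : Ideal R).colon (span {f}) := by
      rw [mem_colon_span_singleton, sub_mul, hax, sub_self]
      exact zero_mem _
    simpa using Submodule.add_mem_sup ha hxa
  · refine sup_le (fun a ha ↦ mem_colon_span_singleton.mpr ?_) (fun z hz ↦ ?_)
    · exact (h.ge (mul_mem_mul ha (mem_span_singleton_self f))).1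
    · rw [mem_colon_span_singleton, Submodule.mem_bot] at hz
      rw [mem_colon_span_singleton, hz]
      exact zero_mem K

end Ideal

/-- With `k = ar_J((f))`, for all `n ≥ k` one has `(J^n : f) = J^{n-k}(J^k : f) + (0 : f)`. -/
theorem colon_power_eq
    {R : Type*} [CommRing R] [IsNoetherianRing R] (f : R) (J : Ideal R) :
    ∀ n : ℕ, arNumber J (Ideal.span {f}) ≤ n →
      Submodule.colon (J ^ n) (Ideal.span {f}) =
        J ^ (n - arNumber J (Ideal.span {f})) *
            Submodule.colon (J ^ arNumber J (Ideal.span {f})) (Ideal.span {f}) +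
          Submodule.colon (⊥ : Ideal R) (Ideal.span {f}) := by
  intro n hn
  apply Ideal.colon_span_singleton_eq_sup_of_inf_eq
  rw [pow_inf_eq_of_arNumber_le J _ hn, ← Ideal.colon_span_singleton_mul_eq_inf, mul_assoc]
end
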